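/- Let Λ₁(T, b, u) = (W - B + N) + T⁻¹(G - N)T and Λ₂(T, b, u) = [b^∧, Λ₁(T, b, u)] - τ^∧, where W, B, N, G are the fixed 5×5 matrices of the biased INS and b^∧ ∈ se₂(3). Then Λ = (Λ₁, Λ₂) is an equivariant lift: for any (D, δ) in SE₂(3) ⋉ se₂(3), Ad_{(D,δ)}(Λ(φ((D,δ),ξ), ψ((D,δ),u))) = Λ(ξ, u), where φ((D,δ),(T,b)) = (TD, Ad_{D⁻¹}(b^∧ - δ)^∨) and ψ((D,δ),(w, τ)) = (Ad_{D⁻¹}(w^∧ - δ)^∨ + Ω(D⁻¹)^∨, Ad_{D⁻¹}(τ^∧)^∨) with Ω(Z) = ZN - N. -/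

import Mathlib

open Matrix

/-- The `se₂(3)` hat map `ℝ⁹ → ℝ^{5×5}`. -/
def hat9 (x : Fin 9 → ℝ) : Matrix (Fin 5) (Fin 5) ℝ :=
  !![0, -x 2, x 1, x 3, x 6;
     x 2, 0, -x 0, x 4, x 7;
     -x 1, x 0, 0, x 5, x 8;
     0, 0, 0, 0, 0;
     0, 0, 0, 0, 0]

/-- The `se₂(3)` vee map, inverse of `hat9` on `se₂(3)`. -/
def vee9 (m : Matrix (Fin 5) (Fin 5) ℝ) : Fin 9 → ℝ :=
  ![m 2 1, m 0 2, m 1 0, m 0 3, m 1 3, m 2 3, m 0 4, m 1 4, m 2 4]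

/-- Membership in `SE₂(3)`. -/
def SE23 (M : Matrix (Fin 5) (Fin 5) ℝ) : Prop :=
  ∃ (A : Matrix (Fin 3) (Fin 3) ℝ) (a b : Fin 3 → ℝ),
    A * Aᵀ = 1 ∧ Aᵀ * A = 1 ∧ A.det = 1 ∧
    M = !![A 0 0, A 0 1, A 0 2, a 0, b 0;
           A 1 0, A 1 1, A 1 2, a 1, b 1;
           A 2 0, A 2 1, A 2 2, a 2, b 2;
           0, 0, 0, 1, 0;
           0, 0, 0, 0, 1]

/-- The matrix `N`, with a single 1 in entry (4,5). -/
def Nmat : Matrix (Fin 5) (Fin 5) ℝ :=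
  !![0, 0, 0, 0, 0;
     0, 0, 0, 0, 0;
     0, 0, 0, 0, 0;
     0, 0, 0, 0, 1;
     0, 0, 0, 0, 0]

/-- The gravity matrix `G = [[0, g, 0],[0,0,0],[0,0,0]]` for `g ∈ ℝ³`. -/
def Gmat (g : Fin 3 → ℝ) : Matrix (Fin 5) (Fin 5) ℝ :=
  hat9 ![0, 0, 0, g 0, g 1, g 2, 0, 0, 0]

/-- `Λ₁(T, b, u) = (W - B + N) + T⁻¹(G - N)T`, with `W = w^∧`, `B = b^∧`. -/
noncomputable def Lam1 (g : Fin 3 → ℝ) (T : Matrix (Fin 5) (Fin 5) ℝ) (b w : Fin 9 → ℝ) :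
    Matrix (Fin 5) (Fin 5) ℝ :=
  (hat9 w - hat9 b + Nmat) + T⁻¹ * (Gmat g - Nmat) * T

/-- `Λ₂(T, b, u) = [b^∧, Λ₁(T, b, u)] - τ^∧`. -/
noncomputable def Lam2 (g : Fin 3 → ℝ) (T : Matrix (Fin 5) (Fin 5) ℝ) (b w τ : Fin 9 → ℝ) :
    Matrix (Fin 5) (Fin 5) ℝ :=
  (hat9 b * Lam1 g T b w - Lam1 g T b w * hat9 b) - hat9 τ

/-- `Ω(Z) = ZN - N`. -/
def Omg (Z : Matrix (Fin 5) (Fin 5) ℝ) : Matrix (Fin 5) (Fin 5) ℝ := Z * Nmat - Nmat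

/-- The state action `φ((D,δ), (T, b)) = (TD, Ad_{D⁻¹}(b^∧ - δ)^∨)`. -/
noncomputable def phiTG (D δ : Matrix (Fin 5) (Fin 5) ℝ)
    (T : Matrix (Fin 5) (Fin 5) ℝ) (b : Fin 9 → ℝ) :
    Matrix (Fin 5) (Fin 5) ℝ × (Fin 9 → ℝ) :=
  (T * D, vee9 (D⁻¹ * (hat9 b - δ) * D))

/-- The input action
`ψ((D,δ), (w, τ)) = (Ad_{D⁻¹}(w^∧ - δ)^∨ + Ω(D⁻¹)^∨, Ad_{D⁻¹}(τ^∧)^∨)`. -/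
noncomputable def psiTG (D δ : Matrix (Fin 5) (Fin 5) ℝ) (w τ : Fin 9 → ℝ) :
    (Fin 9 → ℝ) × (Fin 9 → ℝ) :=
  (vee9 (D⁻¹ * (hat9 w - δ) * D + Omg D⁻¹), vee9 (D⁻¹ * hat9 τ * D))

/-!
Every ingredient of `Λ` transforms under `φ, ψ` by conjugation with `D⁻¹` except the constant
`N`, and the correction `Ω(D⁻¹) = D⁻¹N - N` in `ψ` restores it exactly because `N D = N`:
then `D⁻¹ N - N + N = D⁻¹ N D`, so `Λ₁(φ, ψ) = D⁻¹ Λ₁ D`. The shift of `b^∧` by `δ` makes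
`Λ₂(φ, ψ) = D⁻¹ (Λ₂ - [δ, Λ₁]) D`, and the second component of the Adjoint adds `[δ, Λ₁]` back.
-/

section Conjugation

variable {n α : Type*} [Fintype n] [DecidableEq n] [CommRing α] {D : Matrix n n α}

theorem conj_mul_conj (hD : IsUnit D.det) (X Y : Matrix n n α) :
    D⁻¹ * X * D * (D⁻¹ * Y * D) = D⁻¹ * (X * Y) * D := by
  simp only [Matrix.mul_assoc, mul_nonsing_inv_cancel_left _ _ hD]

theorem mul_conj_mul_inv (hD : IsUnit D.det) (X : Matrix n n α) :
    D * (D⁻¹ * X * D) * D⁻¹ = X := by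
  simp only [Matrix.mul_assoc, mul_nonsing_inv_cancel_left _ _ hD, mul_nonsing_inv _ hD,
    Matrix.mul_one]

end Conjugation

theorem hat9_add (x y : Fin 9 → ℝ) : hat9 (x + y) = hat9 x + hat9 y := by
  ext i j
  fin_cases i <;> fin_cases j <;> simp [hat9] <;> ring

theorem hat9_sub (x y : Fin 9 → ℝ) : hat9 (x - y) = hat9 x - hat9 y := by
  ext i j
  fin_cases i <;> fin_cases j <;> simp [hat9] <;> ring

theorem vee9_add (X Y : Matrix (Fin 5) (Fin 5) ℝ) : vee9 (X + Y) = vee9 X + vee9 Y := by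
  ext i
  fin_cases i <;> simp [vee9]

theorem hat9_vee9_of_mem_range {X : Matrix (Fin 5) (Fin 5) ℝ} (hX : X ∈ Set.range hat9) :
    hat9 (vee9 X) = X := by
  obtain ⟨x, rfl⟩ := hX
  ext i j
  fin_cases i <;> fin_cases j <;> simp [hat9, vee9]

def se23Block (A : Matrix (Fin 3) (Fin 3) ℝ) (a b : Fin 3 → ℝ) : Matrix (Fin 5) (Fin 5) ℝ :=
  !![A 0 0, A 0 1, A 0 2, a 0, b 0;
     A 1 0, A 1 1, A 1 2, a 1, b 1;
     A 2 0, A 2 1, A 2 2, a 2, b 2;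
     0, 0, 0, 1, 0;
     0, 0, 0, 0, 1]

theorem SE23_iff {M : Matrix (Fin 5) (Fin 5) ℝ} :
    SE23 M ↔ ∃ (A : Matrix (Fin 3) (Fin 3) ℝ) (a b : Fin 3 → ℝ),
      A * Aᵀ = 1 ∧ Aᵀ * A = 1 ∧ A.det = 1 ∧ M = se23Block A a b :=
  Iff.rfl

theorem se23Block_mul (A B : Matrix (Fin 3) (Fin 3) ℝ) (a b c d : Fin 3 → ℝ) :
    se23Block A a b * se23Block B c d = se23Block (A * B) (A *ᵥ c + a) (A *ᵥ d + b) := by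
  ext i j
  fin_cases i <;> fin_cases j <;>
    simp [se23Block, Matrix.mul_apply, Fin.sum_univ_five, Fin.sum_univ_three, Matrix.mulVec,
      dotProduct]

theorem se23Block_one : se23Block 1 0 0 = 1 := by
  ext i j
  fin_cases i <;> fin_cases j <;> simp [se23Block]

theorem se23Block_mul_se23Block_transpose {A : Matrix (Fin 3) (Fin 3) ℝ} (hA : A * Aᵀ = 1)
    (a b : Fin 3 → ℝ) : se23Block A a b * se23Block Aᵀ (-(Aᵀ *ᵥ a)) (-(Aᵀ *ᵥ b)) = 1 := by
  simp only [se23Block_mul, hA, Matrix.mulVec_neg, Matrix.mulVec_mulVec, Matrix.one_mulVec,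
    neg_add_cancel, se23Block_one]

theorem se23Block_inv {A : Matrix (Fin 3) (Fin 3) ℝ} (hA : A * Aᵀ = 1) (a b : Fin 3 → ℝ) :
    (se23Block A a b)⁻¹ = se23Block Aᵀ (-(Aᵀ *ᵥ a)) (-(Aᵀ *ᵥ b)) :=
  Matrix.inv_eq_right_inv (se23Block_mul_se23Block_transpose hA a b)

theorem Nmat_mul_se23Block (A : Matrix (Fin 3) (Fin 3) ℝ) (a b : Fin 3 → ℝ) :
    Nmat * se23Block A a b = Nmat := by
  ext i j
  fin_cases i <;> fin_cases j <;> simp [se23Block, Nmat, Matrix.mul_apply, Fin.sum_univ_five]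

set_option maxHeartbeats 400000 in
theorem se23Block_mul_hat9_mul_se23Block_mem_range (A : Matrix (Fin 3) (Fin 3) ℝ)
    (a b a' b' : Fin 3 → ℝ) (x : Fin 9 → ℝ) :
    se23Block Aᵀ a' b' * hat9 x * se23Block A a b ∈ Set.range hat9 := by
  refine ⟨vee9 (se23Block Aᵀ a' b' * hat9 x * se23Block A a b), ?_⟩
  ext i j
  fin_cases i <;> fin_cases j <;>
    simp [se23Block, hat9, vee9, Matrix.mul_apply, Fin.sum_univ_five] <;> ring

theorem se23Block_mul_Nmat_sub_Nmat_mem_range (A : Matrix (Fin 3) (Fin 3) ℝ) (a b : Fin 3 → ℝ) :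
    se23Block A a b * Nmat - Nmat ∈ Set.range hat9 := by
  refine ⟨vee9 (se23Block A a b * Nmat - Nmat), ?_⟩
  ext i j
  fin_cases i <;> fin_cases j <;> simp [se23Block, Nmat, hat9, vee9]

namespace SE23

variable {D : Matrix (Fin 5) (Fin 5) ℝ}

theorem isUnit_det (hD : SE23 D) : IsUnit D.det := by
  obtain ⟨A, a, b, hA, -, -, rfl⟩ := SE23_iff.1 hD
  exact Matrix.isUnit_det_of_right_inverse (se23Block_mul_se23Block_transpose hA a b)

theorem inv (hD : SE23 D) : SE23 D⁻¹ := by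
  obtain ⟨A, a, b, hA, hA', hdet, rfl⟩ := SE23_iff.1 hD
  exact SE23_iff.2 ⟨Aᵀ, _, _, by rwa [transpose_transpose], by rwa [transpose_transpose],
    by rwa [det_transpose], se23Block_inv hA a b⟩

theorem nmat_mul (hD : SE23 D) : Nmat * D = Nmat := by
  obtain ⟨A, a, b, -, -, -, rfl⟩ := SE23_iff.1 hD
  exact Nmat_mul_se23Block A a b

theorem inv_mul_hat9_mul_mem_range (hD : SE23 D) (x : Fin 9 → ℝ) :
    D⁻¹ * hat9 x * D ∈ Set.range hat9 := by
  obtain ⟨A, a, b, hA, -, -, rfl⟩ := SE23_iff.1 hD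
  rw [se23Block_inv hA]
  exact se23Block_mul_hat9_mul_se23Block_mem_range A a b _ _ x

theorem omg_mem_range (hD : SE23 D) : Omg D ∈ Set.range hat9 := by
  obtain ⟨A, a, b, -, -, -, rfl⟩ := SE23_iff.1 hD
  exact se23Block_mul_Nmat_sub_Nmat_mem_range A a b

end SE23

theorem Lam1_phiTG_psiTG (g : Fin 3 → ℝ) {D : Matrix (Fin 5) (Fin 5) ℝ} (hD : SE23 D)
    (d : Fin 9 → ℝ) (T : Matrix (Fin 5) (Fin 5) ℝ) (b w τ : Fin 9 → ℝ) :
    Lam1 g (phiTG D (hat9 d) T b).1 (phiTG D (hat9 d) T b).2 (psiTG D (hat9 d) w τ).1 =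
      D⁻¹ * Lam1 g T b w * D := by
  have hb : hat9 (vee9 (D⁻¹ * (hat9 b - hat9 d) * D)) = D⁻¹ * (hat9 b - hat9 d) * D := by
    rw [← hat9_sub]
    exact hat9_vee9_of_mem_range (hD.inv_mul_hat9_mul_mem_range _)
  have hw : hat9 (vee9 (D⁻¹ * (hat9 w - hat9 d) * D + Omg D⁻¹)) =
      D⁻¹ * (hat9 w - hat9 d) * D + (D⁻¹ * Nmat - Nmat) := by
    rw [vee9_add, hat9_add, ← hat9_sub, hat9_vee9_of_mem_range (hD.inv_mul_hat9_mul_mem_range _),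
      hat9_vee9_of_mem_range hD.inv.omg_mem_range, Omg]
  have hN : D⁻¹ * Nmat = D⁻¹ * Nmat * D := by rw [Matrix.mul_assoc, hD.nmat_mul]
  simp only [phiTG, psiTG, Lam1]
  rw [hb, hw, Matrix.mul_inv_rev, hN]
  noncomm_ring

theorem Lam2_phiTG_psiTG (g : Fin 3 → ℝ) {D : Matrix (Fin 5) (Fin 5) ℝ} (hD : SE23 D)
    (d : Fin 9 → ℝ) (T : Matrix (Fin 5) (Fin 5) ℝ) (b w τ : Fin 9 → ℝ) :
    Lam2 g (phiTG D (hat9 d) T b).1 (phiTG D (hat9 d) T b).2 (psiTG D (hat9 d) w τ).1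
        (psiTG D (hat9 d) w τ).2 =
      D⁻¹ * (Lam2 g T b w τ - (hat9 d * Lam1 g T b w - Lam1 g T b w * hat9 d)) * D := by
  have hb : hat9 (vee9 (D⁻¹ * (hat9 b - hat9 d) * D)) = D⁻¹ * (hat9 b - hat9 d) * D := by
    rw [← hat9_sub]
    exact hat9_vee9_of_mem_range (hD.inv_mul_hat9_mul_mem_range _)
  have hτ : hat9 (vee9 (D⁻¹ * hat9 τ * D)) = D⁻¹ * hat9 τ * D :=
    hat9_vee9_of_mem_range (hD.inv_mul_hat9_mul_mem_range τ)
  rw [Lam2, Lam1_phiTG_psiTG g hD d T b w τ]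
  simp only [phiTG, psiTG]
  rw [hb, hτ, conj_mul_conj hD.isUnit_det, conj_mul_conj hD.isUnit_det, Lam2]
  noncomm_ring

theorem tangent_group_lift_equivariant_general
    (g : Fin 3 → ℝ)
    (D δ : Matrix (Fin 5) (Fin 5) ℝ) (hD : SE23 D) (hδ : ∃ d : Fin 9 → ℝ, δ = hat9 d)
    (T : Matrix (Fin 5) (Fin 5) ℝ) (b w τ : Fin 9 → ℝ) :
    (D * Lam1 g (phiTG D δ T b).1 (phiTG D δ T b).2 (psiTG D δ w τ).1 * D⁻¹ =
        Lam1 g T b w) ∧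
    (D * Lam2 g (phiTG D δ T b).1 (phiTG D δ T b).2 (psiTG D δ w τ).1 (psiTG D δ w τ).2 * D⁻¹ +
        (δ * (D * Lam1 g (phiTG D δ T b).1 (phiTG D δ T b).2 (psiTG D δ w τ).1 * D⁻¹) -
          (D * Lam1 g (phiTG D δ T b).1 (phiTG D δ T b).2 (psiTG D δ w τ).1 * D⁻¹) * δ) =
      Lam2 g T b w τ) := by
  obtain ⟨d, rfl⟩ := hδ
  rw [Lam1_phiTG_psiTG g hD, Lam2_phiTG_psiTG g hD, mul_conj_mul_inv hD.isUnit_det,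
    mul_conj_mul_inv hD.isUnit_det]
  exact ⟨rfl, sub_add_cancel _ _⟩

/-- `Λ = (Λ₁, Λ₂)` is an equivariant lift: for any `(D, δ)` in
`SE₂(3) ⋉ se₂(3)`, `Ad_{(D,δ)}(Λ(φ((D,δ),ξ), ψ((D,δ),u))) = Λ(ξ, u)`, where the
Adjoint of the tangent group is `Ad_{(D,δ)}(γ, ζ) = (Ad_D γ, Ad_D ζ + [δ, Ad_D γ])`. -/
theorem tangent_group_lift_equivariant
    (g : Fin 3 → ℝ)
    (D δ : Matrix (Fin 5) (Fin 5) ℝ) (hD : SE23 D) (hδ : ∃ d : Fin 9 → ℝ, δ = hat9 d)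
    (T : Matrix (Fin 5) (Fin 5) ℝ) (hT : SE23 T) (b w τ : Fin 9 → ℝ) :
    (D * Lam1 g (phiTG D δ T b).1 (phiTG D δ T b).2 (psiTG D δ w τ).1 * D⁻¹ =
        Lam1 g T b w) ∧
    (D * Lam2 g (phiTG D δ T b).1 (phiTG D δ T b).2 (psiTG D δ w τ).1 (psiTG D δ w τ).2 * D⁻¹ +
        (δ * (D * Lam1 g (phiTG D δ T b).1 (phiTG D δ T b).2 (psiTG D δ w τ).1 * D⁻¹) -
          (D * Lam1 g (phiTG D δ T b).1 (phiTG D δ T b).2 (psiTG D δ w τ).1 * D⁻¹) * δ) =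
      Lam2 g T b w τ) :=
  tangent_group_lift_equivariant_general g D δ hD hδ T b w τ
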